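/- arXiv:2506.12763 — 6 statements merged into one kernel-verified Lean document; each statement's English description precedes it below -/
import Mathlib

section
/- For every real number γ with 0 < γ < 1, the partial sums S(n) = Σ_{k=1}^n e^{k^γ} satisfy S(n) ~ (n^{1-γ}/γ)·e^{n^γ} as n → ∞, i.e. the ratio S(n)·γ·n^{γ-1}·e^{-n^γ} tends to 1. -/
/-!
Put `B(x) = x^(1-γ)/γ · e^(x^γ)`, so that `B'(x) = e^(x^γ) (1 + (1-γ)/γ · x^(-γ))` and `B(0) = 0`.
By the mean value theorem `B(k) - B(k-1)` lies between `e^((k-1)^γ)` and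
`e^(k^γ) (1 + (1-γ)/γ · (k-1)^(-γ))`; since `k^γ - (k-1)^γ → 0` for `γ < 1`, it is asymptotic
to `e^(k^γ)`. Summing these asymptotic equivalences of positive terms with divergent sum gives
`S(n) ~ B(n)`, which is the claim.
-/

open Filter Finset Real Asymptotics Set Topology

theorem Asymptotics.IsEquivalent.sum_range {f g : ℕ → ℝ} (h : f ~[atTop] g) (hg : 0 ≤ g)
    (hsum : Tendsto (fun n => ∑ i ∈ range n, g i) atTop atTop) :
    (fun n => ∑ i ∈ range n, f i) ~[atTop] fun n => ∑ i ∈ range n, g i :=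
  (h.isLittleO.sum_range hg hsum).congr_left fun n => by simp only [Pi.sub_apply, sum_sub_distrib]

noncomputable def stretchedExpPrimitive (γ x : ℝ) : ℝ := x ^ (1 - γ) / γ * exp (x ^ γ)

variable {γ x : ℝ}

lemma rpow_add_one_sub_rpow_le (h0 : 0 ≤ γ) (h1 : γ ≤ 1) (hx : 0 < x) :
    (x + 1) ^ γ - x ^ γ ≤ γ * x ^ (γ - 1) := by
  have bernoulli := rpow_one_add_le_one_add_mul_self (s := x⁻¹) (by linarith [inv_pos.2 hx]) h0 h1
  have hsplit : (x + 1) ^ γ = x ^ γ * (1 + x⁻¹) ^ γ := by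
    rw [← mul_rpow hx.le (by positivity), mul_add, mul_inv_cancel₀ hx.ne', mul_one]
  rw [hsplit, rpow_sub_one hx.ne']
  have hxγ := rpow_nonneg hx.le γ
  calc x ^ γ * (1 + x⁻¹) ^ γ - x ^ γ ≤ x ^ γ * (1 + γ * x⁻¹) - x ^ γ := by gcongr
    _ = γ * (x ^ γ / x) := by ring

lemma tendsto_rpow_add_one_sub_rpow (h0 : 0 ≤ γ) (h1 : γ < 1) :
    Tendsto (fun x : ℝ => (x + 1) ^ γ - x ^ γ) atTop (𝓝 0) := by
  have hbound : Tendsto (fun x : ℝ => γ * x ^ (γ - 1)) atTop (𝓝 0) := by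
    have h := (tendsto_rpow_neg_atTop (y := 1 - γ) (by linarith)).const_mul γ
    rwa [mul_zero, neg_sub] at h
  refine tendsto_of_tendsto_of_tendsto_of_le_of_le' tendsto_const_nhds hbound ?_ ?_
  · filter_upwards [eventually_ge_atTop 0] with x hx
    exact sub_nonneg.2 (rpow_le_rpow hx (by linarith) h0)
  · filter_upwards [eventually_gt_atTop 0] with x hx
    exact rpow_add_one_sub_rpow_le h0 h1.le hx

lemma hasDerivAt_stretchedExpPrimitive (hγ : γ ≠ 0) (hx : 0 < x) :
    HasDerivAt (stretchedExpPrimitive γ) (exp (x ^ γ) * (1 + (1 - γ) / γ * x ^ (-γ))) x := by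
  have hpow : HasDerivAt (fun y : ℝ => y ^ (1 - γ)) ((1 - γ) * x ^ (-γ)) x := by
    simpa using hasDerivAt_rpow_const (p := 1 - γ) (Or.inl hx.ne')
  have hexp : HasDerivAt (fun y : ℝ => exp (y ^ γ)) (exp (x ^ γ) * (γ * x ^ (γ - 1))) x :=
    (hasDerivAt_exp _).comp x (hasDerivAt_rpow_const (Or.inl hx.ne'))
  have h : HasDerivAt (stretchedExpPrimitive γ) _ x := (hpow.div_const γ).mul hexp
  convert h using 1
  have hcancel : x ^ (1 - γ) * x ^ (γ - 1) = 1 := by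
    rw [← rpow_add hx]; norm_num
  field_simp
  linear_combination -γ * hcancel

lemma continuous_stretchedExpPrimitive (h0 : 0 ≤ γ) (h1 : γ ≤ 1) :
    Continuous (stretchedExpPrimitive γ) :=
  ((continuous_rpow_const (by linarith)).div_const γ).mul
    (continuous_exp.comp (continuous_rpow_const h0))

lemma exists_stretchedExpPrimitive_add_one_sub_eq (h0 : 0 < γ) (h1 : γ ≤ 1) (hx : 0 ≤ x) :
    ∃ ξ ∈ Set.Ioo x (x + 1), stretchedExpPrimitive γ (x + 1) - stretchedExpPrimitive γ x =
      exp (ξ ^ γ) * (1 + (1 - γ) / γ * ξ ^ (-γ)) := by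
  obtain ⟨ξ, hξ, h⟩ := exists_hasDerivAt_eq_slope (stretchedExpPrimitive γ) _
    (by linarith : x < x + 1) (continuous_stretchedExpPrimitive h0.le h1).continuousOn
    fun y hy => hasDerivAt_stretchedExpPrimitive h0.ne' (hx.trans_lt hy.1)
  exact ⟨ξ, hξ, by rw [h, add_sub_cancel_left, div_one]⟩

lemma exp_rpow_le_stretchedExpPrimitive_add_one_sub (h0 : 0 < γ) (h1 : γ ≤ 1) (hx : 0 ≤ x) :
    exp (x ^ γ) ≤ stretchedExpPrimitive γ (x + 1) - stretchedExpPrimitive γ x := by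
  obtain ⟨ξ, hξ, h⟩ := exists_stretchedExpPrimitive_add_one_sub_eq h0 h1 hx
  have hξ0 : 0 < ξ := hx.trans_lt hξ.1
  have hc : 0 ≤ (1 - γ) / γ * ξ ^ (-γ) :=
    mul_nonneg (div_nonneg (by linarith) h0.le) (rpow_nonneg hξ0.le _)
  rw [h]
  calc exp (x ^ γ) ≤ exp (ξ ^ γ) * 1 := by
        rw [mul_one]; exact exp_le_exp.2 (rpow_le_rpow hx hξ.1.le h0.le)
    _ ≤ _ := by gcongr; linarith

lemma stretchedExpPrimitive_add_one_sub_le (h0 : 0 < γ) (h1 : γ ≤ 1) (hx : 0 < x) :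
    stretchedExpPrimitive γ (x + 1) - stretchedExpPrimitive γ x ≤
      exp ((x + 1) ^ γ) * (1 + (1 - γ) / γ * x ^ (-γ)) := by
  obtain ⟨ξ, hξ, h⟩ := exists_stretchedExpPrimitive_add_one_sub_eq h0 h1 hx.le
  have hξ0 : 0 < ξ := hx.trans hξ.1
  have hc : 0 ≤ (1 - γ) / γ := div_nonneg (by linarith) h0.le
  rw [h]
  gcongr exp ?_ * (1 + _ * ?_)
  · exact rpow_le_rpow hξ0.le hξ.2.le h0.le
  · exact rpow_le_rpow_of_nonpos hx hξ.1.le (by linarith)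

lemma stretchedExpPrimitive_add_one_sub_isEquivalent (h0 : 0 < γ) (h1 : γ < 1) :
    (fun x => stretchedExpPrimitive γ (x + 1) - stretchedExpPrimitive γ x) ~[atTop]
      fun x => exp ((x + 1) ^ γ) := by
  refine isEquivalent_of_tendsto_one ?_
  have hlower : Tendsto (fun x : ℝ => exp (x ^ γ - (x + 1) ^ γ)) atTop (𝓝 1) := by
    simpa using (tendsto_rpow_add_one_sub_rpow h0.le h1).neg.rexp
  have hupper : Tendsto (fun x : ℝ => 1 + (1 - γ) / γ * x ^ (-γ)) atTop (𝓝 1) := by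
    simpa using ((tendsto_rpow_neg_atTop h0).const_mul ((1 - γ) / γ)).const_add 1
  refine tendsto_of_tendsto_of_tendsto_of_le_of_le' hlower hupper ?_ ?_
  · filter_upwards [eventually_ge_atTop 0] with x hx
    rw [Pi.div_apply, le_div_iff₀ (exp_pos _), ← exp_add, sub_add_cancel]
    exact exp_rpow_le_stretchedExpPrimitive_add_one_sub h0 h1.le hx
  · filter_upwards [eventually_gt_atTop 0] with x hx
    rw [Pi.div_apply, div_le_iff₀ (exp_pos _), mul_comm]
    exact stretchedExpPrimitive_add_one_sub_le h0 h1.le hx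

lemma tendsto_stretchedExpPrimitive_atTop (h0 : 0 < γ) (h1 : γ < 1) :
    Tendsto (stretchedExpPrimitive γ) atTop atTop :=
  ((tendsto_rpow_atTop (by linarith)).atTop_div_const h0).atTop_mul_atTop₀
    (tendsto_exp_atTop.comp (tendsto_rpow_atTop h0))

lemma sum_range_stretchedExpPrimitive_add_one_sub (hγ : γ ≠ 1) (n : ℕ) :
    ∑ i ∈ range n, (stretchedExpPrimitive γ ((i : ℝ) + 1) - stretchedExpPrimitive γ i) =
      stretchedExpPrimitive γ n := by
  have hzero : stretchedExpPrimitive γ 0 = 0 := by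
    simp [stretchedExpPrimitive, zero_rpow (sub_ne_zero.2 hγ.symm)]
  simpa [hzero] using sum_range_sub (fun i : ℕ => stretchedExpPrimitive γ i) n

theorem stmt_0 (γ : ℝ) (h0 : 0 < γ) (h1 : γ < 1) :
    Filter.Tendsto
      (fun n : ℕ =>
        (∑ k ∈ Finset.Icc 1 n, Real.exp ((k : ℝ) ^ γ)) * γ * (n : ℝ) ^ (γ - 1) *
          Real.exp (-(n : ℝ) ^ γ))
      Filter.atTop (nhds 1) := by
  have hreindex (n : ℕ) :
      ∑ k ∈ Icc 1 n, exp ((k : ℝ) ^ γ) = ∑ i ∈ range n, exp (((i : ℝ) + 1) ^ γ) := by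
    rw [range_eq_Ico, ← Finset.Ico_add_one_right_eq_Icc]
    simpa using (sum_Ico_add' (fun k : ℕ => exp ((k : ℝ) ^ γ)) 0 n 1).symm
  have hB : Tendsto (fun n : ℕ => stretchedExpPrimitive γ n) atTop atTop :=
    (tendsto_stretchedExpPrimitive_atTop h0 h1).comp tendsto_natCast_atTop_atTop
  have hsum : (fun n : ℕ => ∑ k ∈ Icc 1 n, exp ((k : ℝ) ^ γ)) ~[atTop]
      fun n => stretchedExpPrimitive γ n := by
    have hdiff := (stretchedExpPrimitive_add_one_sub_isEquivalent h0 h1).comp_tendsto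
      tendsto_natCast_atTop_atTop
    have := hdiff.symm.sum_range
      (fun i => (exp_pos _).le.trans
        (exp_rpow_le_stretchedExpPrimitive_add_one_sub h0 h1.le i.cast_nonneg))
      (by simpa only [Function.comp_apply, sum_range_stretchedExpPrimitive_add_one_sub h1.ne]
        using hB)
    simpa only [Function.comp_apply, hreindex, sum_range_stretchedExpPrimitive_add_one_sub h1.ne]
      using this
  have hB_ne : ∀ᶠ n : ℕ in atTop, stretchedExpPrimitive γ n ≠ 0 :=
    (hB.eventually_gt_atTop 0).mono fun n hn => hn.ne'
  refine ((isEquivalent_iff_tendsto_one hB_ne).1 hsum).congr' ?_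
  filter_upwards [eventually_gt_atTop 0] with n hn
  have hn' : (0 : ℝ) < n := by exact_mod_cast hn
  have hinv : (n : ℝ) ^ (γ - 1) = ((n : ℝ) ^ (1 - γ))⁻¹ := by rw [← rpow_neg hn'.le, neg_sub]
  rw [Pi.div_apply, stretchedExpPrimitive, exp_neg, hinv]
  field_simp
end

section
/- Let 0 ≤ γ ≤ γ' ≤ 1 and let β^γ denote the weight sequence (e^{n^γ})_{n≥1}. Then for every subset E of the positive integers, the upper β^γ-density of E is at most the upper β^{γ'}-density of E; in particular, the upper natural density of E equals the upper β^0-density and is a lower bound, while the upper β^1-density is an upper bound. -/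
/-!
Let `α, β` be positive weights with `r = α / β` nonincreasing and `∑ α = ∞`. Fix `c` above the
upper `β`-density, so that the `β`-weighted count `B n` of `E` up to `n` satisfies `B n ≤ c Sβ n`
for large `n`. Abel summation transfers this to the `α`-weighted count `A n`: the defect
`D n = c Sβ n - B n` is nonnegative, and `A n + r n D n - c Sα n` is nonincreasing, its increment
being `(r (n+1) - r n) D n`. Hence `A n ≤ c Sα n + O(1)`, and as `Sα n → ∞` the upper `α`-density
is at most `c`. For `β^γ, β^γ'` with `0 ≤ γ ≤ γ'` the ratio is `exp (n ^ γ - n ^ γ')`, and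
`x ^ γ' - x ^ γ = x ^ γ (x ^ (γ' - γ) - 1)` is nondecreasing on `[1, ∞)`; `β^0` is constant.
-/

/-- Upper `β`-density of a set of positive integers. -/
noncomputable def upperDensity (β : ℕ → ℝ) (E : Set ℕ) : ℝ :=
  Filter.limsup
    (fun n : ℕ =>
      (∑ k ∈ Finset.Icc 1 n, E.indicator β k) / ∑ k ∈ Finset.Icc 1 n, β k)
    Filter.atTop

open Filter Finset

section Comparison

variable {α β : ℕ → ℝ}

lemma sum_indicator_div_sum_nonneg (hβ : ∀ n, 0 ≤ β n) (E : Set ℕ) (n : ℕ) :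
    0 ≤ (∑ k ∈ Icc 1 n, E.indicator β k) / ∑ k ∈ Icc 1 n, β k :=
  div_nonneg (sum_nonneg fun k _ => Set.indicator_nonneg (fun k _ => hβ k) k)
    (sum_nonneg fun k _ => hβ k)

lemma sum_indicator_le_sum (hβ : ∀ n, 0 ≤ β n) (E : Set ℕ) (n : ℕ) :
    ∑ k ∈ Icc 1 n, E.indicator β k ≤ ∑ k ∈ Icc 1 n, β k :=
  sum_le_sum fun k _ => Set.indicator_le_self' (fun k _ => hβ k) k

lemma eventually_sum_indicator_le_of_upperDensity_lt (hβ : ∀ n, 0 ≤ β n) {E : Set ℕ} {c : ℝ}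
    (h : upperDensity β E < c) :
    ∀ᶠ n in atTop, ∑ k ∈ Icc 1 n, E.indicator β k ≤ c * ∑ k ∈ Icc 1 n, β k := by
  have hbdd : IsBoundedUnder (· ≤ ·) atTop
      fun n => (∑ k ∈ Icc 1 n, E.indicator β k) / ∑ k ∈ Icc 1 n, β k :=
    isBoundedUnder_of ⟨1, fun n => div_le_one_of_le₀ (sum_indicator_le_sum hβ E n)
      (sum_nonneg fun k _ => hβ k)⟩
  filter_upwards [eventually_lt_of_limsup_lt h hbdd] with n hn
  rcases (sum_nonneg fun k _ => hβ k : 0 ≤ ∑ k ∈ Icc 1 n, β k).eq_or_lt with hS | hS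
  · simpa [← hS] using sum_indicator_le_sum hβ E n
  · exact ((div_lt_iff₀ hS).mp hn).le

lemma exists_sum_indicator_mul_le {r : ℕ → ℝ} (hr0 : ∀ n, 0 ≤ r n)
    (E : Set ℕ) {c : ℝ} {N : ℕ} (hr : AntitoneOn r (Set.Ici N))
    (hB : ∀ n ≥ N, ∑ k ∈ Icc 1 n, E.indicator β k ≤ c * ∑ k ∈ Icc 1 n, β k) :
    ∃ C, ∀ n ≥ N, ∑ k ∈ Icc 1 n, E.indicator (fun k => r k * β k) k
      ≤ c * ∑ k ∈ Icc 1 n, r k * β k + C := by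
  set A := fun n => ∑ k ∈ Icc 1 n, E.indicator (fun k => r k * β k) k
  set SA := fun n => ∑ k ∈ Icc 1 n, r k * β k
  set D := fun n => c * ∑ k ∈ Icc 1 n, β k - ∑ k ∈ Icc 1 n, E.indicator β k
  have hD : ∀ n ≥ N, 0 ≤ D n := fun n hn => sub_nonneg.mpr (hB n hn)
  set Φ := fun n => A n + r n * D n - c * SA n
  have hΦ : ∀ n ≥ N, Φ n ≤ Φ N := by
    intro n hn
    induction n, hn using Nat.le_induction with
    | base => exact le_rfl
    | succ n hn ih =>
      have hsucc (u : ℕ → ℝ) : ∑ k ∈ Icc 1 (n + 1), u k = ∑ k ∈ Icc 1 n, u k + u (n + 1) :=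
        sum_Icc_succ_top (by omega) u
      have hincr : Φ (n + 1) = Φ n + (r (n + 1) - r n) * D n := by
        simp only [Φ, A, SA, D, hsucc, Set.indicator_mul_right]
        ring
      have hanti : r (n + 1) ≤ r n :=
        hr (Set.mem_Ici.mpr hn) (Set.mem_Ici.mpr (by omega)) n.le_succ
      rw [hincr]
      nlinarith [hD n hn]
  refine ⟨Φ N, fun n hn => ?_⟩
  have hΦn : Φ n = A n + r n * D n - c * SA n := rfl
  linarith [hΦ n hn, mul_nonneg (hr0 n) (hD n hn)]

lemma upperDensity_le_of_eventually_sum_indicator_le (hα : ∀ n, 0 ≤ α n)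
    (hS : Tendsto (fun n => ∑ k ∈ Icc 1 n, α k) atTop atTop) {E : Set ℕ} {c C : ℝ}
    (h : ∀ᶠ n in atTop, ∑ k ∈ Icc 1 n, E.indicator α k ≤ c * ∑ k ∈ Icc 1 n, α k + C) :
    upperDensity α E ≤ c := by
  have hlim : Tendsto (fun n => c + C / ∑ k ∈ Icc 1 n, α k) atTop (nhds c) := by
    simpa using tendsto_const_nhds.add (tendsto_const_nhds.div_atTop hS)
  have hle : ∀ᶠ n in atTop, (∑ k ∈ Icc 1 n, E.indicator α k) / ∑ k ∈ Icc 1 n, α k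
      ≤ c + C / ∑ k ∈ Icc 1 n, α k := by
    filter_upwards [h, hS.eventually_gt_atTop 0] with n hn hpos
    rw [div_le_iff₀ hpos, add_mul, div_mul_cancel₀ _ hpos.ne']
    linarith
  calc upperDensity α E ≤ limsup (fun n => c + C / ∑ k ∈ Icc 1 n, α k) atTop :=
        limsup_le_limsup hle
          (isCoboundedUnder_le_of_le atTop (sum_indicator_div_sum_nonneg hα E))
          hlim.isBoundedUnder_le
    _ = c := hlim.limsup_eq

theorem upperDensity_le_upperDensity_of_antitoneOn (hα : ∀ n, 0 ≤ α n) (hβ : ∀ n, 0 < β n)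
    (hr : AntitoneOn (fun n => α n / β n) (Set.Ici 1))
    (hS : Tendsto (fun n => ∑ k ∈ Icc 1 n, α k) atTop atTop) (E : Set ℕ) :
    upperDensity α E ≤ upperDensity β E := by
  refine le_of_forall_gt_imp_ge_of_dense fun c hc => ?_
  obtain ⟨N, hN⟩ := eventually_atTop.mp
    ((eventually_sum_indicator_le_of_upperDensity_lt (fun n => (hβ n).le) hc).and
      (eventually_ge_atTop 1))
  obtain ⟨C, hC⟩ := exists_sum_indicator_mul_le (fun n => div_nonneg (hα n) (hβ n).le) E
    (hr.mono (Set.Ici_subset_Ici.mpr (hN N le_rfl).2)) fun n hn => (hN n hn).1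
  have hαr : (fun k => α k / β k * β k) = α := funext fun k => div_mul_cancel₀ _ (hβ k).ne'
  rw [hαr] at hC
  exact upperDensity_le_of_eventually_sum_indicator_le hα hS (eventually_atTop.mpr ⟨N, hC⟩)

end Comparison

lemma upperDensity_const {w : ℝ} (hw : w ≠ 0) (E : Set ℕ) :
    upperDensity (fun _ => w) E
      = limsup (fun n : ℕ => (∑ k ∈ Icc 1 n, E.indicator (fun _ => (1 : ℝ)) k) / n) atTop := by
  unfold upperDensity
  congr 1
  funext n
  have hind : ∀ k, E.indicator (fun _ => w) k = w * E.indicator (fun _ => (1 : ℝ)) k := by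
    intro k
    simpa using Set.indicator_mul_right E (fun _ => w) (fun _ => (1 : ℝ)) (i := k)
  rw [sum_congr rfl fun k _ => hind k, ← mul_sum, sum_const, Nat.card_Icc, nsmul_eq_mul,
    Nat.add_sub_cancel, mul_comm (n : ℝ), mul_div_mul_left _ _ hw]

lemma tendsto_sum_Icc_atTop_of_one_le {α : ℕ → ℝ} (hα : ∀ n, 1 ≤ α n) :
    Tendsto (fun n => ∑ k ∈ Icc 1 n, α k) atTop atTop := by
  refine tendsto_atTop_mono (fun n => ?_) tendsto_natCast_atTop_atTop
  simpa using card_nsmul_le_sum (Icc 1 n) α 1 fun k _ => hα k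

lemma Real.monotoneOn_rpow_sub_rpow {γ γ' : ℝ} (h0 : 0 ≤ γ) (h1 : γ ≤ γ') :
    MonotoneOn (fun x : ℝ => x ^ γ' - x ^ γ) (Set.Ici 1) := by
  intro x hx y hy hxy
  dsimp only
  have hx0 : 0 < x := lt_of_lt_of_le one_pos hx
  have hy0 : 0 < y := lt_of_lt_of_le one_pos hy
  have hsplit {z : ℝ} (hz : 0 < z) : z ^ γ' - z ^ γ = z ^ γ * (z ^ (γ' - γ) - 1) := by
    rw [Real.rpow_sub hz, mul_sub, mul_div_cancel₀ _ (Real.rpow_pos_of_pos hz γ).ne', mul_one]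
  rw [hsplit hx0, hsplit hy0]
  have hδ : 0 ≤ γ' - γ := sub_nonneg.mpr h1
  exact mul_le_mul (Real.rpow_le_rpow hx0.le hxy h0)
    (sub_le_sub_right (Real.rpow_le_rpow hx0.le hxy hδ) 1)
    (sub_nonneg.mpr (Real.one_le_rpow hx hδ)) (Real.rpow_nonneg hy0.le γ)

lemma upperDensity_exp_rpow_le {γ γ' : ℝ} (h0 : 0 ≤ γ) (h1 : γ ≤ γ') (E : Set ℕ) :
    upperDensity (fun n => Real.exp ((n : ℝ) ^ γ)) E
      ≤ upperDensity (fun n => Real.exp ((n : ℝ) ^ γ')) E := by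
  refine upperDensity_le_upperDensity_of_antitoneOn (fun n => (Real.exp_pos _).le)
    (fun n => Real.exp_pos _) ?_
    (tendsto_sum_Icc_atTop_of_one_le fun n => Real.one_le_exp (Real.rpow_nonneg n.cast_nonneg γ)) E
  intro m hm n hn hmn
  have hmono := Real.monotoneOn_rpow_sub_rpow h0 h1 (a := (m : ℝ)) (b := (n : ℝ))
    (Set.mem_Ici.mpr (by exact_mod_cast hm)) (Set.mem_Ici.mpr (by exact_mod_cast hn))
    (by exact_mod_cast hmn)
  simp only [← Real.exp_sub, Real.exp_le_exp]
  linarith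

theorem stmt_1 (γ γ' : ℝ) (h0 : 0 ≤ γ) (h1 : γ ≤ γ') (h2 : γ' ≤ 1) (E : Set ℕ) :
    Filter.limsup
        (fun n : ℕ => (∑ k ∈ Finset.Icc 1 n, E.indicator (fun _ => (1 : ℝ)) k) / n)
        Filter.atTop
      = upperDensity (fun n => Real.exp ((n : ℝ) ^ (0 : ℝ))) E ∧
    upperDensity (fun n => Real.exp ((n : ℝ) ^ (0 : ℝ))) E
      ≤ upperDensity (fun n => Real.exp ((n : ℝ) ^ γ)) E ∧
    upperDensity (fun n => Real.exp ((n : ℝ) ^ γ)) E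
      ≤ upperDensity (fun n => Real.exp ((n : ℝ) ^ γ')) E ∧
    upperDensity (fun n => Real.exp ((n : ℝ) ^ γ')) E
      ≤ upperDensity (fun n => Real.exp ((n : ℝ) ^ (1 : ℝ))) E := by
  refine ⟨?_, upperDensity_exp_rpow_le le_rfl h0 E, upperDensity_exp_rpow_le h0 h1 E,
    upperDensity_exp_rpow_le (h0.trans h1) h2 E⟩
  simp only [Real.rpow_zero]
  exact (upperDensity_const (Real.exp_ne_zero 1) E).symm
end

section
/- For 1/2 < γ < 1 and a fixed positive integer α, consider along even integers n the quantity R(n) = (Σ_{j ≤ n² + ⌊(1/2)·⌊n^{2(1−γ)}/α − 1⌋⌋} e^{j^γ}) / (Σ_{j ≤ n² + ⌊n^{2(1−γ)}⌋} e^{j^γ}). Then R(n) → e^{−γ(1 − 1/(2α))} as n → ∞. -/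
/-!
By concavity of `x ↦ x ^ γ`, for `M ≤ j ≤ N` the exponent `j ^ γ` lies between
`N ^ γ - γ M ^ (γ - 1) (N - j)` and `N ^ γ - γ N ^ (γ - 1) (N - j)`, so `∑_{j ≤ N} e^{j ^ γ}` is
squeezed between two geometric series of ratio `≈ e^{-γ N ^ (γ - 1)}`. Choosing `M` with
`N - M = o(N)` but `N ^ (γ - 1) (N - M) → ∞` gives
`∑_{j ≤ N} e^{j ^ γ} ~ (N ^ (1 - γ) / γ) e^{N ^ γ}`.
If `a ~ A w ^ (1 - γ)` and `b ~ B w ^ (1 - γ)`, then `(w + b) ^ γ - (w + a) ^ γ → γ (B - A)` by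
the same concavity bounds, so the sums up to `w + a` and `w + b` have ratio `→ e^{-γ (B - A)}`.
Here `w = n ^ 2`, `A = 1 / (2α)` and `B = 1`.
-/

open Real Filter Topology Finset Asymptotics

noncomputable def expRpowSum (γ : ℝ) (N : ℕ) : ℝ := ∑ j ∈ Icc 1 N, exp ((j : ℝ) ^ γ)

section
variable {γ : ℝ}

theorem rpow_le_rpow_add_mul_sub (hγ0 : 0 ≤ γ) (hγ1 : γ ≤ 1) {x y : ℝ} (hx : 0 ≤ x) (hy : 0 < y) :
    x ^ γ ≤ y ^ γ + γ * y ^ (γ - 1) * (x - y) := by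
  have h := rpow_one_add_le_one_add_mul_self (s := x / y - 1) (by linarith [div_nonneg hx hy.le])
    hγ0 hγ1
  rw [add_sub_cancel, div_rpow hx hy.le, div_le_iff₀ (rpow_pos_of_pos hy γ)] at h
  have hy' : y ^ (γ - 1) = y ^ γ / y := by rw [rpow_sub hy, rpow_one]
  rw [hy']
  refine h.trans_eq ?_
  field_simp

theorem exp_rpow_le_mul_pow (hγ0 : 0 ≤ γ) (hγ1 : γ ≤ 1) {j N : ℕ} (hN : 0 < N) (hjN : j ≤ N) :
    exp ((j : ℝ) ^ γ) ≤ exp ((N : ℝ) ^ γ) * exp (-(γ * (N : ℝ) ^ (γ - 1))) ^ (N - j) := by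
  have h := rpow_le_rpow_add_mul_sub hγ0 hγ1 j.cast_nonneg (Nat.cast_pos.2 hN)
  rw [← exp_nat_mul, ← exp_add, exp_le_exp, Nat.cast_sub hjN]
  linarith

theorem exp_mul_pow_le_exp_rpow (hγ0 : 0 ≤ γ) (hγ1 : γ ≤ 1) {M j N : ℕ} (hM : 0 < M)
    (hMj : M ≤ j) (hjN : j ≤ N) :
    exp ((N : ℝ) ^ γ) * exp (-(γ * (M : ℝ) ^ (γ - 1))) ^ (N - j) ≤ exp ((j : ℝ) ^ γ) := by
  have hM' : (0 : ℝ) < M := Nat.cast_pos.2 hM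
  have hMj' : (M : ℝ) ≤ j := Nat.cast_le.2 hMj
  have h := rpow_le_rpow_add_mul_sub hγ0 hγ1 N.cast_nonneg (hM'.trans_le hMj')
  have hmono : (j : ℝ) ^ (γ - 1) * (N - j) ≤ (M : ℝ) ^ (γ - 1) * (N - j) :=
    mul_le_mul_of_nonneg_right (rpow_le_rpow_of_nonpos hM' hMj' (by linarith))
      (sub_nonneg.2 (Nat.cast_le.2 hjN))
  have := mul_le_mul_of_nonneg_left hmono hγ0
  rw [← exp_nat_mul, ← exp_add, exp_le_exp, Nat.cast_sub hjN]
  linarith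

theorem sum_Icc_pow_sub_eq_sum_range (q : ℝ) (M N : ℕ) :
    ∑ j ∈ Icc M N, q ^ (N - j) = ∑ k ∈ range (N + 1 - M), q ^ k := by
  rw [← Ico_add_one_right_eq_Icc, sum_Ico_reflect _ _ le_rfl, Nat.sub_self, range_eq_Ico]

theorem exp_neg_mul_rpow_lt_one (hγ0 : 0 < γ) {N : ℕ} (hN : 0 < N) :
    exp (-(γ * (N : ℝ) ^ (γ - 1))) < 1 :=
  exp_lt_one_iff.2 (neg_lt_zero.2 (mul_pos hγ0 (rpow_pos_of_pos (Nat.cast_pos.2 hN) _)))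

theorem expRpowSum_le (hγ0 : 0 < γ) (hγ1 : γ ≤ 1) {N : ℕ} (hN : 0 < N) :
    expRpowSum γ N ≤ exp ((N : ℝ) ^ γ) / (1 - exp (-(γ * (N : ℝ) ^ (γ - 1)))) := by
  set q := exp (-(γ * (N : ℝ) ^ (γ - 1)))
  calc expRpowSum γ N ≤ ∑ j ∈ Icc 1 N, exp ((N : ℝ) ^ γ) * q ^ (N - j) :=
        sum_le_sum fun j hj => exp_rpow_le_mul_pow hγ0.le hγ1 hN (mem_Icc.1 hj).2
    _ = exp ((N : ℝ) ^ γ) * ∑ k ∈ range N, q ^ k := by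
        rw [← mul_sum, sum_Icc_pow_sub_eq_sum_range q, Nat.add_sub_cancel]
    _ ≤ exp ((N : ℝ) ^ γ) * (q ^ 0 / (1 - q)) := by
        gcongr
        rw [range_eq_Ico]
        exact geom_sum_Ico_le_of_lt_one (exp_pos _).le (exp_neg_mul_rpow_lt_one hγ0 hN)
    _ = exp ((N : ℝ) ^ γ) / (1 - q) := by rw [pow_zero, mul_one_div]

theorem le_expRpowSum (hγ0 : 0 < γ) (hγ1 : γ ≤ 1) {M N : ℕ} (hM : 0 < M) :
    exp ((N : ℝ) ^ γ) * (1 - exp (-(γ * (M : ℝ) ^ (γ - 1))) ^ (N + 1 - M)) /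
        (1 - exp (-(γ * (M : ℝ) ^ (γ - 1)))) ≤ expRpowSum γ N := by
  set r := exp (-(γ * (M : ℝ) ^ (γ - 1)))
  have hr : r < 1 := exp_neg_mul_rpow_lt_one hγ0 hM
  calc exp ((N : ℝ) ^ γ) * (1 - r ^ (N + 1 - M)) / (1 - r)
      = ∑ j ∈ Icc M N, exp ((N : ℝ) ^ γ) * r ^ (N - j) := by
        rw [← mul_sum, sum_Icc_pow_sub_eq_sum_range r, geom_sum_eq hr.ne, mul_div_assoc,
          ← neg_div_neg_eq, neg_sub, neg_sub]
    _ ≤ ∑ j ∈ Icc M N, exp ((j : ℝ) ^ γ) :=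
        sum_le_sum fun j hj =>
          exp_mul_pow_le_exp_rpow hγ0.le hγ1 hM (mem_Icc.1 hj).1 (mem_Icc.1 hj).2
    _ ≤ expRpowSum γ N :=
        sum_le_sum_of_subset_of_nonneg (Icc_subset_Icc_left hM) fun _ _ _ => (exp_pos _).le

theorem div_rpow_one_sub_div_mul_exp (hγ0 : γ ≠ 0) {N : ℕ} (hN : 0 < N) (S : ℝ) :
    S / ((N : ℝ) ^ (1 - γ) / γ * exp ((N : ℝ) ^ γ)) =
      γ * (N : ℝ) ^ (γ - 1) * (S / exp ((N : ℝ) ^ γ)) := by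
  have hN' : (0 : ℝ) < N := Nat.cast_pos.2 hN
  rw [show 1 - γ = -(γ - 1) by ring, rpow_neg hN'.le]
  have := rpow_pos_of_pos hN' (γ - 1)
  field_simp

theorem expRpowSum_div_le (hγ0 : 0 < γ) (hγ1 : γ ≤ 1) {N : ℕ} (hN : 0 < N) :
    expRpowSum γ N / ((N : ℝ) ^ (1 - γ) / γ * exp ((N : ℝ) ^ γ)) ≤
      γ * (N : ℝ) ^ (γ - 1) / (1 - exp (-(γ * (N : ℝ) ^ (γ - 1)))) := by
  rw [div_rpow_one_sub_div_mul_exp hγ0.ne' hN, div_eq_mul_one_div (γ * _)]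
  refine mul_le_mul_of_nonneg_left ?_ (by positivity)
  rw [div_le_iff₀ (exp_pos _), one_div_mul_eq_div]
  exact expRpowSum_le hγ0 hγ1 hN

theorem le_expRpowSum_div (hγ0 : 0 < γ) (hγ1 : γ ≤ 1) {M N : ℕ} (hM : 0 < M) (hN : 0 < N) :
    (1 - exp (-(γ * (M : ℝ) ^ (γ - 1))) ^ (N + 1 - M)) * ((M : ℝ) / N) ^ (1 - γ) *
        (γ * (M : ℝ) ^ (γ - 1) / (1 - exp (-(γ * (M : ℝ) ^ (γ - 1))))) ≤
      expRpowSum γ N / ((N : ℝ) ^ (1 - γ) / γ * exp ((N : ℝ) ^ γ)) := by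
  have hM' : (0 : ℝ) < M := Nat.cast_pos.2 hM
  have hN' : (0 : ℝ) < N := Nat.cast_pos.2 hN
  have hr := sub_pos.2 (exp_neg_mul_rpow_lt_one hγ0 hM)
  rw [div_rpow_one_sub_div_mul_exp hγ0.ne' hN]
  calc _ = γ * (N : ℝ) ^ (γ - 1) * (exp ((N : ℝ) ^ γ) *
        (1 - exp (-(γ * (M : ℝ) ^ (γ - 1))) ^ (N + 1 - M)) /
          (1 - exp (-(γ * (M : ℝ) ^ (γ - 1)))) / exp ((N : ℝ) ^ γ)) := by
        rw [div_rpow hM'.le hN'.le, show 1 - γ = -(γ - 1) by ring, rpow_neg hM'.le,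
          rpow_neg hN'.le]
        have := rpow_pos_of_pos hM' (γ - 1)
        have := rpow_pos_of_pos hN' (γ - 1)
        field_simp
    _ ≤ _ := by
        gcongr
        exact le_expRpowSum hγ0 hγ1 hM

theorem tendsto_div_one_sub_exp_neg :
    Tendsto (fun t : ℝ => t / (1 - exp (-t))) (𝓝[≠] 0) (𝓝 1) := by
  have h : HasDerivAt (fun t : ℝ => 1 - exp (-t)) 1 0 := by
    simpa using ((hasDerivAt_neg (0 : ℝ)).exp).const_sub 1
  simpa [slope_def_field] using (hasDerivAt_iff_tendsto_slope.1 h).inv₀ one_ne_zero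

theorem tendsto_mul_rpow_div_one_sub_exp (hγ0 : 0 < γ) (hγ1 : γ < 1) :
    Tendsto (fun x : ℝ => γ * x ^ (γ - 1) / (1 - exp (-(γ * x ^ (γ - 1))))) atTop (𝓝 1) := by
  refine tendsto_div_one_sub_exp_neg.comp (tendsto_nhdsWithin_iff.2 ⟨?_, ?_⟩)
  · simpa using (tendsto_rpow_neg_atTop (sub_pos.2 hγ1)).const_mul γ
  · filter_upwards [eventually_gt_atTop 0] with x hx
    exact (mul_pos hγ0 (rpow_pos_of_pos hx _)).ne'

theorem exists_cutoff (hγ0 : 0 < γ) :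
    ∃ M : ℕ → ℕ, (∀ N, M N ≤ N) ∧ Tendsto (fun N => (M N : ℝ) / N) atTop (𝓝 1) ∧
      Tendsto (fun N : ℕ => (N : ℝ) ^ (γ - 1) * (N - M N)) atTop atTop := by
  have hgap : ∀ N : ℕ, 0 < N →
      (N : ℝ) ^ (1 - γ / 2) ≤ N - ⌊(N : ℝ) - (N : ℝ) ^ (1 - γ / 2)⌋₊ ∧
        (N : ℝ) - ⌊(N : ℝ) - (N : ℝ) ^ (1 - γ / 2)⌋₊ < N ^ (1 - γ / 2) + 1 := by
    intro N hN
    have hN' : (1 : ℝ) ≤ N := Nat.one_le_cast.2 hN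
    have hδ : (N : ℝ) ^ (1 - γ / 2) ≤ N := by
      simpa using rpow_le_rpow_of_exponent_le hN' (by linarith : 1 - γ / 2 ≤ 1)
    constructor
    · linarith [Nat.floor_le (sub_nonneg.2 hδ)]
    · linarith [Nat.lt_floor_add_one ((N : ℝ) - (N : ℝ) ^ (1 - γ / 2))]
  have hle : ∀ N : ℕ, ⌊(N : ℝ) - (N : ℝ) ^ (1 - γ / 2)⌋₊ ≤ N := fun N =>
    Nat.floor_le_of_le (by linarith [rpow_nonneg N.cast_nonneg (1 - γ / 2)])
  refine ⟨fun N => ⌊(N : ℝ) - (N : ℝ) ^ (1 - γ / 2)⌋₊, hle, ?_, ?_⟩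
  · have hsmall : Tendsto (fun N : ℕ => 1 - ((N : ℝ) ^ (-(γ / 2)) + (N : ℝ)⁻¹)) atTop (𝓝 1) := by
      simpa using tendsto_const_nhds.sub (((tendsto_rpow_neg_atTop (by linarith)).add
        tendsto_inv_atTop_zero).comp tendsto_natCast_atTop_atTop)
    refine tendsto_of_tendsto_of_tendsto_of_le_of_le' hsmall tendsto_const_nhds ?_ ?_
    · filter_upwards [eventually_gt_atTop 0] with N hN
      have hN' : (0 : ℝ) < N := Nat.cast_pos.2 hN
      have hpow : (N : ℝ) ^ (-(γ / 2)) = (N : ℝ) ^ (1 - γ / 2) / N := by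
        rw [← rpow_sub_one hN'.ne']; congr 1; ring
      rw [hpow, show 1 - ((N : ℝ) ^ (1 - γ / 2) / N + (N : ℝ)⁻¹) =
        (N - (N : ℝ) ^ (1 - γ / 2) - 1) / N by field_simp; ring]
      exact div_le_div_of_nonneg_right (by linarith [(hgap N hN).2]) hN'.le
    · filter_upwards [eventually_gt_atTop 0] with N hN
      exact div_le_one_of_le₀ (Nat.cast_le.2 (hle N)) N.cast_nonneg
  · refine tendsto_atTop_mono' atTop ?_ ((tendsto_rpow_atTop (half_pos hγ0)).comp
      tendsto_natCast_atTop_atTop)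
    filter_upwards [eventually_gt_atTop 0] with N hN
    have hN' : (0 : ℝ) < N := Nat.cast_pos.2 hN
    calc (N : ℝ) ^ (γ / 2) = (N : ℝ) ^ (γ - 1) * (N : ℝ) ^ (1 - γ / 2) := by
          rw [← rpow_add hN']; congr 1; ring
      _ ≤ _ := mul_le_mul_of_nonneg_left (hgap N hN).1 (rpow_nonneg hN'.le _)

theorem tendsto_exp_neg_mul_rpow_pow_window (hγ0 : 0 < γ) (hγ1 : γ ≤ 1) {M : ℕ → ℕ}
    (hMN : ∀ N, M N ≤ N) (hMtop : Tendsto (fun N => (M N : ℝ)) atTop atTop)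
    (hgap : Tendsto (fun N : ℕ => (N : ℝ) ^ (γ - 1) * (N - M N)) atTop atTop) :
    Tendsto (fun N => exp (-(γ * (M N : ℝ) ^ (γ - 1))) ^ (N + 1 - M N)) atTop (𝓝 0) := by
  have hexponent : Tendsto (fun N => ((N + 1 - M N : ℕ) : ℝ) * (γ * (M N : ℝ) ^ (γ - 1)))
      atTop atTop := by
    refine tendsto_atTop_mono' _ ?_ (hgap.const_mul_atTop hγ0)
    filter_upwards [hMtop.eventually_gt_atTop 0] with N hM
    have hNM : (M N : ℝ) ≤ N := Nat.cast_le.2 (hMN N)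
    have hpow : (N : ℝ) ^ (γ - 1) ≤ (M N : ℝ) ^ (γ - 1) :=
      rpow_le_rpow_of_nonpos hM hNM (by linarith)
    rw [Nat.cast_sub (Nat.le_succ_of_le (hMN N)), Nat.cast_add_one]
    calc γ * ((N : ℝ) ^ (γ - 1) * (N - M N)) ≤ γ * ((M N : ℝ) ^ (γ - 1) * (N + 1 - M N)) := by
          gcongr ?_ * (?_ * ?_)
          linarith
      _ = _ := by ring
  refine (tendsto_exp_neg_atTop_nhds_zero.comp hexponent).congr fun N => ?_
  rw [Function.comp_apply, ← exp_nat_mul, mul_neg]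

theorem isEquivalent_expRpowSum (hγ0 : 0 < γ) (hγ1 : γ < 1) :
    expRpowSum γ ~[atTop] fun N : ℕ => (N : ℝ) ^ (1 - γ) / γ * exp ((N : ℝ) ^ γ) := by
  obtain ⟨M, hMN, hMdiv, hgap⟩ := exists_cutoff hγ0
  have hg := tendsto_mul_rpow_div_one_sub_exp hγ0 hγ1
  have hMtop : Tendsto (fun N => (M N : ℝ)) atTop atTop := by
    refine (hMdiv.pos_mul_atTop one_pos tendsto_natCast_atTop_atTop).congr' ?_
    filter_upwards [eventually_gt_atTop 0] with N hN
    exact div_mul_cancel₀ _ (Nat.cast_pos.2 hN).ne'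
  have htail := tendsto_exp_neg_mul_rpow_pow_window hγ0 hγ1.le hMN hMtop hgap
  have hlower : Tendsto (fun N => (1 - exp (-(γ * (M N : ℝ) ^ (γ - 1))) ^ (N + 1 - M N)) *
      ((M N : ℝ) / N) ^ (1 - γ) * (γ * (M N : ℝ) ^ (γ - 1) /
        (1 - exp (-(γ * (M N : ℝ) ^ (γ - 1)))))) atTop (𝓝 1) := by
    simpa using ((tendsto_const_nhds.sub htail).mul (hMdiv.rpow_const (Or.inl one_ne_zero))).mul
      (hg.comp hMtop)
  refine isEquivalent_of_tendsto_one (tendsto_of_tendsto_of_tendsto_of_le_of_le' hlower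
    (hg.comp tendsto_natCast_atTop_atTop) ?_ ?_)
  · filter_upwards [hMtop.eventually_gt_atTop 0, eventually_gt_atTop 0] with N hM hN
    exact le_expRpowSum_div hγ0 hγ1.le (Nat.cast_pos.1 hM) hN
  · filter_upwards [eventually_gt_atTop 0] with N hN
    exact expRpowSum_div_le hγ0 hγ1.le hN

variable {ι : Type*} {l : Filter ι}

theorem tendsto_expRpowSum_div_expRpowSum (hγ0 : 0 < γ) (hγ1 : γ < 1) {u v : ι → ℕ} {c : ℝ}
    (hu : Tendsto u l atTop) (hv : Tendsto v l atTop)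
    (huv : Tendsto (fun i => (u i : ℝ) / v i) l (𝓝 1))
    (hc : Tendsto (fun i => (v i : ℝ) ^ γ - (u i : ℝ) ^ γ) l (𝓝 c)) :
    Tendsto (fun i => expRpowSum γ (u i) / expRpowSum γ (v i)) l (𝓝 (exp (-c))) := by
  have hequiv := ((isEquivalent_expRpowSum hγ0 hγ1).comp_tendsto hu).div
    ((isEquivalent_expRpowSum hγ0 hγ1).comp_tendsto hv)
  refine hequiv.symm.tendsto_nhds ?_
  have hlim : Tendsto (fun i => ((u i : ℝ) / v i) ^ (1 - γ) *
      exp (-((v i : ℝ) ^ γ - (u i : ℝ) ^ γ))) l (𝓝 (exp (-c))) := by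
    simpa using (huv.rpow_const (Or.inl one_ne_zero)).mul ((continuous_exp.tendsto _).comp hc.neg)
  refine hlim.congr' ?_
  filter_upwards [hu.eventually_gt_atTop 0, hv.eventually_gt_atTop 0] with i hui hvi
  have hu' : (0 : ℝ) < u i := Nat.cast_pos.2 hui
  have hv' : (0 : ℝ) < v i := Nat.cast_pos.2 hvi
  simp only [Pi.div_apply, Function.comp_apply]
  rw [div_rpow hu'.le hv'.le, neg_sub, exp_sub]
  have := rpow_pos_of_pos hu' (1 - γ)
  have := rpow_pos_of_pos hv' (1 - γ)
  field_simp

theorem tendsto_rpow_sub_rpow (hγ0 : 0 ≤ γ) (hγ1 : γ ≤ 1) {u v w : ι → ℝ} {L : ℝ}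
    (hw : ∀ᶠ i in l, 0 < w i) (hu : Tendsto (fun i => u i / w i) l (𝓝 1))
    (hv : Tendsto (fun i => v i / w i) l (𝓝 1))
    (hL : Tendsto (fun i => (v i - u i) / w i ^ (1 - γ)) l (𝓝 L)) :
    Tendsto (fun i => v i ^ γ - u i ^ γ) l (𝓝 (γ * L)) := by
  have hpos : ∀ {p : ι → ℝ}, Tendsto (fun i => p i / w i) l (𝓝 1) → ∀ᶠ i in l, 0 < p i := by
    intro p hp
    filter_upwards [hw, hp.eventually (lt_mem_nhds one_pos)] with i hwi hpi
    exact (div_pos_iff_of_pos_right hwi).1 hpi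
  have hslope : ∀ {p : ι → ℝ}, Tendsto (fun i => p i / w i) l (𝓝 1) →
      Tendsto (fun i => γ * p i ^ (γ - 1) * (v i - u i)) l (𝓝 (γ * L)) := by
    intro p hp
    have := ((hp.rpow_const (p := γ - 1) (Or.inl one_ne_zero)).mul hL).const_mul γ
    rw [one_rpow, one_mul] at this
    refine this.congr' ?_
    filter_upwards [hw, hpos hp] with i hwi hpi
    rw [div_rpow hpi.le hwi.le, show 1 - γ = -(γ - 1) by ring, rpow_neg hwi.le]
    have := rpow_pos_of_pos hwi (γ - 1)
    field_simp
  refine tendsto_of_tendsto_of_tendsto_of_le_of_le' (hslope hv) (hslope hu) ?_ ?_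
  · filter_upwards [hpos hu, hpos hv] with i hui hvi
    linarith [rpow_le_rpow_add_mul_sub hγ0 hγ1 hui.le hvi]
  · filter_upwards [hpos hu, hpos hv] with i hui hvi
    linarith [rpow_le_rpow_add_mul_sub hγ0 hγ1 hvi.le hui]

theorem tendsto_add_div_self {w c : ι → ℕ} {C : ℝ} (hγ0 : 0 < γ) (hw : Tendsto w l atTop)
    (hc : Tendsto (fun i => (c i : ℝ) / (w i : ℝ) ^ (1 - γ)) l (𝓝 C)) :
    Tendsto (fun i => ((w i + c i : ℕ) : ℝ) / w i) l (𝓝 1) := by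
  have h := (tendsto_const_nhds (x := (1 : ℝ))).add
    (hc.mul ((tendsto_rpow_neg_atTop hγ0).comp (tendsto_natCast_atTop_atTop.comp hw)))
  rw [mul_zero, add_zero] at h
  refine h.congr' ?_
  filter_upwards [hw.eventually_gt_atTop 0] with i hi
  have hw' : (0 : ℝ) < w i := Nat.cast_pos.2 hi
  simp only [Function.comp_apply]
  rw [rpow_sub hw', rpow_one, rpow_neg hw'.le]
  have := rpow_pos_of_pos hw' γ
  push_cast
  field_simp

theorem tendsto_expRpowSum_add_div_expRpowSum_add (hγ0 : 0 < γ) (hγ1 : γ < 1)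
    {w a b : ι → ℕ} {A B : ℝ} (hw : Tendsto w l atTop)
    (ha : Tendsto (fun i => (a i : ℝ) / (w i : ℝ) ^ (1 - γ)) l (𝓝 A))
    (hb : Tendsto (fun i => (b i : ℝ) / (w i : ℝ) ^ (1 - γ)) l (𝓝 B)) :
    Tendsto (fun i => expRpowSum γ (w i + a i) / expRpowSum γ (w i + b i)) l
      (𝓝 (exp (-(γ * (B - A))))) := by
  have hwa := tendsto_add_div_self hγ0 hw ha
  have hwb := tendsto_add_div_self hγ0 hw hb
  have hw0 : ∀ᶠ i in l, (0 : ℝ) < w i := by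
    filter_upwards [hw.eventually_gt_atTop 0] with i hi using Nat.cast_pos.2 hi
  refine tendsto_expRpowSum_div_expRpowSum hγ0 hγ1
    (tendsto_atTop_mono (fun _ => Nat.le_add_right _ _) hw)
    (tendsto_atTop_mono (fun _ => Nat.le_add_right _ _) hw) ?_
    (tendsto_rpow_sub_rpow hγ0.le hγ1.le hw0 hwa hwb ((hb.sub ha).congr fun i => ?_))
  · have h := hwa.div hwb one_ne_zero
    rw [div_one] at h
    refine h.congr' ?_
    filter_upwards [hw0] with i hi
    exact div_div_div_cancel_right₀ hi.ne' _ _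
  · push_cast
    ring

theorem tendsto_div_of_abs_sub_mul_le {x g : ι → ℝ} {k C : ℝ}
    (hx : Tendsto x l atTop) (h : ∀ᶠ i in l, |g i - k * x i| ≤ C) :
    Tendsto (fun i => g i / x i) l (𝓝 k) := by
  have hsmall : Tendsto (fun i => (g i - k * x i) / x i) l (𝓝 0) :=
    squeeze_zero_norm' (by
      filter_upwards [h, hx.eventually_gt_atTop 0] with i hi hxi
      rw [norm_div, Real.norm_of_nonneg hxi.le]
      exact div_le_div_of_nonneg_right hi hxi.le) (tendsto_const_nhds.div_atTop hx)
  have hlim := (tendsto_const_nhds (x := k)).add hsmall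
  rw [add_zero] at hlim
  refine hlim.congr' ?_
  filter_upwards [hx.eventually_gt_atTop 0] with i hxi
  field_simp
  ring

theorem abs_natFloor_half_natFloor_sub_le {y : ℝ} (hy : 0 ≤ y) :
    |(⌊((⌊y⌋₊ : ℝ) - 1) / 2⌋₊ : ℝ) - y / 2| ≤ 2 := by
  have hle : (⌊((⌊y⌋₊ : ℝ) - 1) / 2⌋₊ : ℝ) ≤ y / 2 :=
    (Nat.cast_le.2 (Nat.floor_le_floor (by linarith [Nat.floor_le hy]))).trans
      (Nat.floor_le (by linarith))
  rw [abs_le]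
  constructor <;>
    linarith [Nat.lt_floor_add_one y, Nat.lt_floor_add_one (((⌊y⌋₊ : ℝ) - 1) / 2)]

end

theorem stmt_4_general (γ : ℝ) (h1 : 1 / 2 < γ) (h2 : γ < 1) (α : ℕ) :
    Filter.Tendsto
      (fun m : ℕ =>
        let n : ℕ := 2 * m
        (∑ j ∈ Finset.Icc 1
            (n ^ 2 +
              ⌊((⌊(n : ℝ) ^ (2 * (1 - γ)) / (α : ℝ)⌋₊ : ℝ) - 1) / 2⌋₊),
            Real.exp ((j : ℝ) ^ γ)) /
          ∑ j ∈ Finset.Icc 1 (n ^ 2 + ⌊(n : ℝ) ^ (2 * (1 - γ))⌋₊),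
            Real.exp ((j : ℝ) ^ γ))
      Filter.atTop (nhds (Real.exp (-γ * (1 - 1 / (2 * (α : ℝ)))))) := by
  set x : ℕ → ℝ := fun m => ((2 * m : ℕ) : ℝ) ^ (2 * (1 - γ)) with hx_def
  have hn : Tendsto (fun m : ℕ => 2 * m) atTop atTop := tendsto_id.const_mul_atTop' two_pos
  have hx : Tendsto x atTop atTop :=
    (tendsto_rpow_atTop (by linarith)).comp (tendsto_natCast_atTop_atTop.comp hn)
  have hscale (m : ℕ) : (((2 * m) ^ 2 : ℕ) : ℝ) ^ (1 - γ) = x m := by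
    rw [Nat.cast_pow, ← rpow_natCast, ← rpow_mul (Nat.cast_nonneg _), hx_def]
    push_cast
    rfl
  have ha := tendsto_div_of_abs_sub_mul_le hx (k := 1 / (2 * (α : ℝ)))
    (g := fun m => (⌊((⌊x m / α⌋₊ : ℝ) - 1) / 2⌋₊ : ℝ)) (.of_forall fun m => by
      rw [show 1 / (2 * (α : ℝ)) * x m = x m / α / 2 by ring]
      exact abs_natFloor_half_natFloor_sub_le (by positivity))
  have hb := tendsto_div_of_abs_sub_mul_le hx (k := 1) (g := fun m => (⌊x m⌋₊ : ℝ))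
    (.of_forall fun m => by
      rw [one_mul]
      exact Nat.abs_floor_sub_le (by positivity))
  rw [neg_mul]
  exact tendsto_expRpowSum_add_div_expRpowSum_add (by linarith) h2
    ((tendsto_pow_atTop two_ne_zero).comp hn) (by simpa only [hscale] using ha)
    (by simpa only [hscale] using hb)

theorem stmt_4 (γ : ℝ) (h1 : 1 / 2 < γ) (h2 : γ < 1) (α : ℕ) (hα : 0 < α) :
    Filter.Tendsto
      (fun m : ℕ =>
        let n : ℕ := 2 * m
        (∑ j ∈ Finset.Icc 1
            (n ^ 2 +
              ⌊((⌊(n : ℝ) ^ (2 * (1 - γ)) / (α : ℝ)⌋₊ : ℝ) - 1) / 2⌋₊),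
            Real.exp ((j : ℝ) ^ γ)) /
          ∑ j ∈ Finset.Icc 1 (n ^ 2 + ⌊(n : ℝ) ^ (2 * (1 - γ))⌋₊),
            Real.exp ((j : ℝ) ^ γ))
      Filter.atTop (nhds (Real.exp (-γ * (1 - 1 / (2 * (α : ℝ)))))) :=
  stmt_4_general γ h1 h2 α
end

section
/- For 0 < γ < 1, the sequence u_n = ((n − ⌊n^{1−γ}⌋ − 1)/n)^{1−γ} · exp((n − ⌊n^{1−γ}⌋ − 1)^γ − n^γ) converges to e^{−γ} as n → ∞. -/
/-!
Write `h = ⌊n^{1-γ}⌋ + 1`, so that `h / n^{1-γ} → 1` and hence `t = h / n → 0`. Then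
`n^γ - (n - h)^γ = (h / n^{1-γ}) · (1 - (1 - t)^γ) / t`, and the second factor tends to the
derivative `γ` of `t ↦ 1 - (1 - t)^γ` at `0`; so the exponent tends to `-γ` while the prefactor
`(1 - t)^{1-γ}` tends to `1`.
-/

open Filter Real Topology

theorem tendsto_one_sub_one_sub_rpow_div (γ : ℝ) :
    Tendsto (fun t : ℝ => (1 - (1 - t) ^ γ) / t) (𝓝[≠] 0) (𝓝 γ) := by
  have hderiv : HasDerivAt (fun t : ℝ => (1 - t) ^ γ) (-γ) 0 := by
    simpa using ((hasDerivAt_id (0 : ℝ)).const_sub 1).rpow_const (p := γ) (by simp)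
  have := hderiv.tendsto_slope_zero.neg
  simp only [neg_neg] at this
  refine this.congr fun t => ?_
  simp only [zero_add, sub_zero, one_rpow, smul_eq_mul]
  ring

section

variable {α : Type*} {l : Filter α} {x h : α → ℝ} {γ c : ℝ}

theorem tendsto_div_of_tendsto_div_rpow_one_sub (hγ : 0 < γ) (hx : Tendsto x l atTop)
    (hh : Tendsto (fun a => h a / x a ^ (1 - γ)) l (𝓝 c)) :
    Tendsto (fun a => h a / x a) l (𝓝 0) := by
  have hdecay : Tendsto (fun a => x a ^ (-γ)) l (𝓝 0) := (tendsto_rpow_neg_atTop hγ).comp hx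
  have hprod := hh.mul hdecay
  rw [mul_zero] at hprod
  refine hprod.congr' ?_
  filter_upwards [hx.eventually_gt_atTop 0] with a ha
  rw [rpow_neg ha.le, rpow_sub ha, rpow_one]
  field_simp

theorem tendsto_rpow_sub_rpow_sub (hγ : 0 < γ) (hx : Tendsto x l atTop)
    (hh : Tendsto (fun a => h a / x a ^ (1 - γ)) l (𝓝 c)) (hne : ∀ᶠ a in l, h a ≠ 0) :
    Tendsto (fun a => x a ^ γ - (x a - h a) ^ γ) l (𝓝 (c * γ)) := by
  have ht := tendsto_div_of_tendsto_div_rpow_one_sub hγ hx hh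
  have ht' : Tendsto (fun a => h a / x a) l (𝓝[≠] 0) :=
    tendsto_nhdsWithin_iff.2 ⟨ht, by
      filter_upwards [hne, hx.eventually_gt_atTop 0] with a h1 h2 using div_ne_zero h1 h2.ne'⟩
  refine (hh.mul ((tendsto_one_sub_one_sub_rpow_div γ).comp ht')).congr' ?_
  filter_upwards [hne, hx.eventually_gt_atTop 0, ht.eventually_le_const one_pos] with a h1 h2 h3
  have hsplit : x a - h a = x a * (1 - h a / x a) := by field_simp
  rw [Function.comp_apply, hsplit, mul_rpow h2.le (by linarith), rpow_sub h2, rpow_one]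
  field_simp

end

theorem tendsto_nat_floor_add_one_div_atTop :
    Tendsto (fun y : ℝ => ((⌊y⌋₊ : ℝ) + 1) / y) atTop (𝓝 1) := by
  have := (tendsto_nat_floor_div_atTop (R := ℝ)).add tendsto_inv_atTop_zero
  rw [add_zero] at this
  refine this.congr' ?_
  filter_upwards [eventually_ne_atTop 0] with y hy
  rw [add_div, one_div]

theorem stmt_6 (γ : ℝ) (h0 : 0 < γ) (h1 : γ < 1) :
    Filter.Tendsto
      (fun n : ℕ =>
        (((n : ℝ) - (⌊(n : ℝ) ^ (1 - γ)⌋₊ : ℝ) - 1) / (n : ℝ)) ^ (1 - γ) *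
          Real.exp (((n : ℝ) - (⌊(n : ℝ) ^ (1 - γ)⌋₊ : ℝ) - 1) ^ γ - (n : ℝ) ^ γ))
      Filter.atTop (nhds (Real.exp (-γ))) := by
  set h : ℕ → ℝ := fun n => (⌊(n : ℝ) ^ (1 - γ)⌋₊ : ℝ) + 1
  have hn : Tendsto (fun n : ℕ => (n : ℝ)) atTop atTop := tendsto_natCast_atTop_atTop
  have hh : Tendsto (fun n => h n / (n : ℝ) ^ (1 - γ)) atTop (𝓝 1) :=
    tendsto_nat_floor_add_one_div_atTop.comp ((tendsto_rpow_atTop (by linarith)).comp hn)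
  have hratio : Tendsto (fun n : ℕ => ((n - h n) / n) ^ (1 - γ)) atTop (𝓝 1) := by
    have := ((tendsto_const_nhds (x := (1 : ℝ))).sub
      (tendsto_div_of_tendsto_div_rpow_one_sub h0 hn hh)).rpow_const (p := 1 - γ) (by simp)
    simp only [sub_zero, one_rpow] at this
    refine this.congr' ?_
    filter_upwards [eventually_ne_atTop 0] with n hn0
    rw [sub_div, div_self (by exact_mod_cast hn0)]
  have hgap := tendsto_rpow_sub_rpow_sub h0 hn hh (Eventually.of_forall fun n => by positivity)
  rw [one_mul] at hgap
  have := hratio.mul ((continuous_exp.tendsto _).comp hgap.neg)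
  simpa [sub_sub, h] using this
end

section
/- Let 1 < p ≤ 2, let q be the conjugate exponent (1/p + 1/q = 1), and fix γ ∈ (0, 1/2]. For n ∈ ℕ, the function g(r) = r^{qn + q/2 − 1/2}·e^{−qr}/(n!)^q on (0,∞) attains its maximum at r = a_n := n + 1/(2p), and √n·g(a_n) converges to (2π)^{−q/2} as n → ∞. -/
open Real Filter

theorem stmt_7 (p q γ : ℝ) (hp1 : 1 < p) (hp2 : p ≤ 2) (hpq : 1 / p + 1 / q = 1)
    (hγ1 : 0 < γ) (hγ2 : γ ≤ 1 / 2) :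
    (∀ n : ℕ, 1 ≤ n →
      IsMaxOn
        (fun r : ℝ =>
          r ^ (q * n + q / 2 - 1 / 2) * Real.exp (-q * r) / (n.factorial : ℝ) ^ q)
        (Set.Ioi 0) ((n : ℝ) + 1 / (2 * p))) ∧
    Filter.Tendsto
      (fun n : ℕ =>
        Real.sqrt n *
          (((n : ℝ) + 1 / (2 * p)) ^ (q * n + q / 2 - 1 / 2) *
              Real.exp (-q * ((n : ℝ) + 1 / (2 * p))) / (n.factorial : ℝ) ^ q))
      Filter.atTop (nhds ((2 * Real.pi) ^ (-q / 2))) := by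
  have hp0 : 0 < p := lt_trans one_pos hp1
  have hp1' : 0 < p - 1 := by linarith
  have hq0 : q ≠ 0 := by
    intro h
    rw [h, div_zero, add_zero] at hpq
    have : p = 1 := by field_simp at hpq; linarith
    linarith
  have hpq' : q + p = p * q := by field_simp at hpq; linarith
  have hq1 : 1 < q := by nlinarith [sq_nonneg (p - q)]
  have hq0' : 0 < q := by linarith
  set c : ℝ := 1 / (2 * p) with hc_def
  have hc : 0 < c := by positivity
  have hqc : q * c = (q - 1) / 2 := by
    rw [hc_def]
    field_simp
    nlinarith [hpq']
  -- Part 1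
  have part1 : ∀ n : ℕ, 1 ≤ n →
      IsMaxOn
        (fun r : ℝ =>
          r ^ (q * n + q / 2 - 1 / 2) * Real.exp (-q * r) / (n.factorial : ℝ) ^ q)
        (Set.Ioi 0) ((n : ℝ) + 1 / (2 * p)) := by
    intro n hn
    set a : ℝ := (n : ℝ) + 1 / (2 * p) with ha_def
    have ha : 0 < a := by
      have : (0:ℝ) < n := by exact_mod_cast hn
      positivity
    have hα : q * n + q / 2 - 1 / 2 = q * a := by
      rw [ha_def]; rw [← hc_def] at *
      have : q * ((n:ℝ) + c) = q * n + q * c := by ring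
      rw [this, hqc]; ring
    intro r hr
    simp only [Set.mem_setOf_eq]
    have hr0 : (0:ℝ) < r := hr
    have hfac : (0:ℝ) < (n.factorial : ℝ) ^ q := by
      apply rpow_pos_of_pos
      exact_mod_cast n.factorial_pos
    apply div_le_div_of_nonneg_right ?_ hfac.le
    rw [hα, rpow_def_of_pos hr0, rpow_def_of_pos ha, ← Real.exp_add, ← Real.exp_add,
      Real.exp_le_exp]
    have key : Real.log r - Real.log a ≤ r / a - 1 := by
      have h1 := Real.log_le_sub_one_of_pos (div_pos hr0 ha)
      rwa [Real.log_div hr0.ne' ha.ne'] at h1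
    have h2 : a * (Real.log r - Real.log a) ≤ a * (r / a - 1) :=
      mul_le_mul_of_nonneg_left key ha.le
    have h3 : a * (r / a - 1) = r - a := by field_simp
    nlinarith [mul_le_mul_of_nonneg_left (h2.trans_eq h3) hq0'.le]
  refine ⟨part1, ?_⟩
  -- Part 2
  have tS := Stirling.tendsto_stirlingSeq_sqrt_pi
  have hsp : (0:ℝ) < √π := Real.sqrt_pos.mpr Real.pi_pos
  have t1 : Tendsto (fun n : ℕ => (Stirling.stirlingSeq n)⁻¹ ^ q) atTop
      (nhds ((√π)⁻¹ ^ q)) :=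
    (tS.inv₀ hsp.ne').rpow_const (Or.inl (by positivity))
  have t2 : Tendsto (fun n : ℕ => ((1 + c / (n:ℝ)) ^ n) ^ q) atTop
      (nhds (Real.exp c ^ q)) :=
    (Real.tendsto_one_add_div_pow_exp c).rpow_const (Or.inl (Real.exp_pos c).ne')
  have hd : Tendsto (fun n : ℕ => 1 + c / (n:ℝ)) atTop (nhds 1) := by
    have := (tendsto_const_nhds (x := c)).div_atTop
      (tendsto_natCast_atTop_atTop (R := ℝ))
    simpa using (tendsto_const_nhds (x := (1:ℝ))).add this
  have t3 : Tendsto (fun n : ℕ => (1 + c / (n:ℝ)) ^ ((q - 1) / 2)) atTop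
      (nhds ((1:ℝ) ^ ((q - 1) / 2))) :=
    hd.rpow_const (Or.inl one_ne_zero)
  have tG : Tendsto (fun n : ℕ =>
      (Stirling.stirlingSeq n)⁻¹ ^ q * (2:ℝ) ^ (-q/2) * ((1 + c / (n:ℝ)) ^ n) ^ q *
        Real.exp (-(q * c)) * (1 + c / (n:ℝ)) ^ ((q - 1) / 2)) atTop
      (nhds ((√π)⁻¹ ^ q * (2:ℝ) ^ (-q/2) * Real.exp c ^ q * Real.exp (-(q * c)) *
        (1:ℝ) ^ ((q - 1) / 2))) :=
    (((t1.mul tendsto_const_nhds).mul t2).mul tendsto_const_nhds).mul t3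
  have hL0 : (√π)⁻¹ ^ q * (2:ℝ) ^ (-q/2) * Real.exp c ^ q * Real.exp (-(q * c)) *
      (1:ℝ) ^ ((q - 1) / 2) = (2 * Real.pi) ^ (-q/2) := by
    rw [Real.one_rpow, mul_one, ← Real.exp_mul, mul_assoc, ← Real.exp_add,
      show c * q + -(q * c) = 0 by ring, Real.exp_zero, mul_one,
      Real.mul_rpow (by norm_num) Real.pi_pos.le,
      Real.sqrt_eq_rpow, ← Real.rpow_neg Real.pi_pos.le,
      ← Real.rpow_mul Real.pi_pos.le,
      show -(1/2:ℝ) * q = -q/2 by ring]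
    ring
  rw [hL0] at tG
  refine tG.congr' ?_
  rw [Filter.eventuallyEq_iff_exists_mem]
  refine ⟨Set.Ici 1, Filter.Ici_mem_atTop 1, fun n hn => ?_⟩
  have hn1 : 1 ≤ n := hn
  have hN : (0:ℝ) < (n:ℝ) := by exact_mod_cast hn1
  have hs : 0 < Stirling.stirlingSeq n := by
    obtain ⟨m, rfl⟩ := Nat.exists_eq_succ_of_ne_zero (by omega : n ≠ 0)
    exact Stirling.stirlingSeq'_pos m
  have hfact : ((n.factorial : ℝ)) =
      Stirling.stirlingSeq n * (Real.sqrt (2 * (n:ℝ)) * ((n:ℝ) / Real.exp 1) ^ n) := by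
    rw [Stirling.stirlingSeq, div_mul_cancel₀]
    positivity
  have ha : (0:ℝ) < (n:ℝ) + c := by positivity
  have h1c : 1 + c / (n:ℝ) = ((n:ℝ) + c) / (n:ℝ) := by field_simp
  have h1cpos : (0:ℝ) < 1 + c / (n:ℝ) := by positivity
  simp only [hfact, h1c]
  apply Real.log_injOn_pos (Set.mem_Ioi.mpr (by positivity)) (Set.mem_Ioi.mpr (by positivity))
  simp (disch := positivity) only [Real.log_mul, Real.log_div, Real.log_rpow, Real.log_pow,
    Real.log_inv, Real.log_exp, Real.log_sqrt]
  ring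
end

section
/- Let q ≥ 2 and 1/2 < γ < 1. For n ∈ ℕ, the function g(r) = r^{qn + q/2 − (1−γ)}·e^{−qr}/(n!)^q on (0,∞) attains its maximum at r = a'_n := n + 1/2 − (1−γ)/q, and n^{1−γ}·g(a'_n) converges to (2π)^{−q/2} as n → ∞. -/
/-!
Writing `d = 1/2 - (1-γ)/q`, the exponent is `q (n + d)` and the candidate maximiser is `n + d`.
Since `r ^ (q a) e^{-q r} = exp (q (a log r - r))` and `a log r - r` is maximal at `r = a`
(`log x ≤ x - 1`), the maximum sits at `a = n + d`. At that point the value is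
`((n + d) ^ (n + d) e^{-(n + d)} / n!) ^ q`, and Stirling's formula together with
`(1 + d/n) ^ (n + d) → e^d` gives
`(n + d) ^ (n + d) e^{-(n + d)} / n! ~ n ^ (d - 1/2) / √(2π)`;
the power `n ^ (q (d - 1/2)) = n ^ (-(1-γ))` is exactly cancelled by the prefactor `n ^ (1-γ)`.
-/

open Real Filter Topology
open scoped Nat

namespace Real

lemma rpow_mul_mul_exp_neg_le {q a r : ℝ} (hq : 0 ≤ q) (ha : 0 < a) (hr : 0 < r) :
    r ^ (q * a) * exp (-q * r) ≤ a ^ (q * a) * exp (-q * a) := by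
  have hlog : a * log (r / a) ≤ r - a := by
    have := mul_le_mul_of_nonneg_left (log_le_sub_one_of_pos (div_pos hr ha)) ha.le
    rwa [mul_sub, mul_div_cancel₀ _ ha.ne', mul_one] at this
  rw [log_div hr.ne' ha.ne'] at hlog
  rw [rpow_def_of_pos hr, rpow_def_of_pos ha, ← exp_add, ← exp_add, exp_le_exp]
  nlinarith [mul_le_mul_of_nonneg_left hlog hq]

lemma tendsto_one_add_div_rpow_add_exp (d : ℝ) :
    Tendsto (fun x : ℝ => (1 + d / x) ^ (x + d)) atTop (𝓝 (exp d)) := by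
  have hbase : Tendsto (fun x : ℝ => 1 + d / x) atTop (𝓝 1) := by
    simpa using ((tendsto_const_nhds (x := d)).div_atTop tendsto_id).const_add 1
  have hlim := (tendsto_one_add_div_rpow_exp d).mul (hbase.rpow_const (p := d) (Or.inl one_ne_zero))
  rw [one_rpow, mul_one] at hlim
  refine hlim.congr' ?_
  filter_upwards [hbase.eventually (lt_mem_nhds one_pos)] with x hx
  rw [rpow_add hx]

lemma rpow_mul_rpow_self_mul_exp_neg_div_factorial {n : ℕ} {d : ℝ} (hn : n ≠ 0)
    (hnd : 0 < n + d) :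
    (n : ℝ) ^ (1 / 2 - d) * ((n + d) ^ (n + d) * exp (-(n + d)) / n !) =
      (1 + d / n) ^ (n + d) * exp (-d) / (√2 * Stirling.stirlingSeq n) := by
  have hx : (0 : ℝ) < n := by positivity
  have hs : 0 < Stirling.stirlingSeq n := by
    obtain ⟨m, rfl⟩ := Nat.exists_eq_succ_of_ne_zero hn
    exact Stirling.stirlingSeq'_pos m
  have hfac : (n ! : ℝ) = Stirling.stirlingSeq n * (√(2 * n) * (n / exp 1) ^ n) := by
    rw [Stirling.stirlingSeq, div_mul_cancel₀ _ (by positivity)]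
  rw [hfac, one_add_div hx.ne', div_rpow hnd.le hx.le, rpow_add hx, rpow_natCast,
    rpow_sub hx, sqrt_mul zero_le_two, sqrt_eq_rpow (n : ℝ), div_pow, exp_one_pow, neg_add,
    exp_add, exp_neg]
  field_simp

lemma tendsto_rpow_mul_rpow_self_mul_exp_neg_div_factorial (d : ℝ) :
    Tendsto (fun n : ℕ => (n : ℝ) ^ (1 / 2 - d) * ((n + d) ^ (n + d) * exp (-(n + d)) / n !))
      atTop (𝓝 (√(2 * π))⁻¹) := by
  have hlim := (((tendsto_one_add_div_rpow_add_exp d).comp tendsto_natCast_atTop_atTop).mul_const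
    (exp (-d))).div (Stirling.tendsto_stirlingSeq_sqrt_pi.const_mul √2) (by positivity)
  rw [← exp_add, add_neg_cancel, exp_zero, ← sqrt_mul zero_le_two, one_div] at hlim
  refine hlim.congr' ?_
  filter_upwards [eventually_ne_atTop 0, tendsto_natCast_atTop_atTop.eventually_gt_atTop (-d)]
    with n hn hnd
  exact (rpow_mul_rpow_self_mul_exp_neg_div_factorial hn (by linarith)).symm

end Real

theorem stmt_8_general (q γ : ℝ) (hq : 2 ≤ q) (h1 : 1 / 2 < γ) :
    (∀ n : ℕ, 1 ≤ n →
      IsMaxOn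
        (fun r : ℝ =>
          r ^ (q * n + q / 2 - (1 - γ)) * Real.exp (-q * r) / (n.factorial : ℝ) ^ q)
        (Set.Ioi 0) ((n : ℝ) + 1 / 2 - (1 - γ) / q)) ∧
    Filter.Tendsto
      (fun n : ℕ =>
        (n : ℝ) ^ (1 - γ) *
          (((n : ℝ) + 1 / 2 - (1 - γ) / q) ^ (q * n + q / 2 - (1 - γ)) *
              Real.exp (-q * ((n : ℝ) + 1 / 2 - (1 - γ) / q)) / (n.factorial : ℝ) ^ q))
      Filter.atTop (nhds ((2 * Real.pi) ^ (-q / 2))) := by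
  have hq0 : 0 < q := by linarith
  obtain ⟨d, hd_def⟩ : ∃ d : ℝ, d = 1 / 2 - (1 - γ) / q := ⟨_, rfl⟩
  have hd : 0 < d := by
    have : (1 - γ) / q < 1 / 2 := by rw [div_lt_iff₀ hq0]; linarith
    linarith
  have hpoint (n : ℕ) : (n : ℝ) + 1 / 2 - (1 - γ) / q = n + d := by rw [hd_def]; ring
  have hqd : q * d = q / 2 - (1 - γ) := by rw [hd_def]; field_simp
  have hexp (n : ℕ) : q * n + q / 2 - (1 - γ) = q * (n + d) := by linear_combination -hqd
  refine ⟨fun n _ r hr => ?_, ?_⟩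
  · simp only [hpoint, hexp]
    exact div_le_div_of_nonneg_right
      (Real.rpow_mul_mul_exp_neg_le hq0.le (by positivity) hr) (by positivity)
  · have hpow : (√(2 * π))⁻¹ ^ q = (2 * π) ^ (-q / 2) := by
      rw [sqrt_eq_rpow, ← rpow_neg (by positivity), ← rpow_mul (by positivity)]
      ring_nf
    rw [← hpow]
    refine ((Real.tendsto_rpow_mul_rpow_self_mul_exp_neg_div_factorial d).rpow_const
      (Or.inr hq0.le)).congr fun n => ?_
    have hn : (0 : ℝ) ≤ n := n.cast_nonneg
    rw [hpoint, hexp, mul_rpow (by positivity) (by positivity), ← rpow_mul hn,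
      div_rpow (by positivity) (by positivity), mul_rpow (by positivity) (by positivity),
      ← rpow_mul (by positivity), ← exp_mul]
    rw [mul_comm (n + d : ℝ) q, mul_comm (-(n + d) : ℝ) q, mul_neg, neg_mul]
    congr 2
    linear_combination -hqd

theorem stmt_8 (q γ : ℝ) (hq : 2 ≤ q) (h1 : 1 / 2 < γ) (h2 : γ < 1) :
    (∀ n : ℕ, 1 ≤ n →
      IsMaxOn
        (fun r : ℝ =>
          r ^ (q * n + q / 2 - (1 - γ)) * Real.exp (-q * r) / (n.factorial : ℝ) ^ q)
        (Set.Ioi 0) ((n : ℝ) + 1 / 2 - (1 - γ) / q)) ∧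
    Filter.Tendsto
      (fun n : ℕ =>
        (n : ℝ) ^ (1 - γ) *
          (((n : ℝ) + 1 / 2 - (1 - γ) / q) ^ (q * n + q / 2 - (1 - γ)) *
              Real.exp (-q * ((n : ℝ) + 1 / 2 - (1 - γ) / q)) / (n.factorial : ℝ) ^ q))
      Filter.atTop (nhds ((2 * Real.pi) ^ (-q / 2))) :=
  stmt_8_general q γ hq h1
end
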